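/- arXiv:1711.05359 — 3 statements merged into one kernel-verified Lean document; each statement's English description precedes it below -/
import Mathlib

section
/- Fix an integer n ≥ 3, t* = tan(π/(2n)), and let ρ(t) = 2t*/(t² − t*²) = 1/(t − t*) − 1/(t + t*). For 1 ≤ k ≤ n−1 let F_k^{-1}(t) = t*²(b_k t − a_k)/(−a_k t − b_k) with a_k = cos(πk/n), b_k = sin(πk/n). Then for every t ∈ (−t*, t*), ρ(t) = ∑_{k=1}^{n−1} ρ(F_k^{-1}(t)) · |(F_k^{-1})'(t)|, i.e., ρ is the density of an (infinite) absolutely continuous invariant measure for the finite Gauss transformation. -/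
/-!
Write `φ_β(t) = 1 / (t + tan β)` and `θ = π / (2n)`, so `t* = tan θ` and `ρ = φ_{-θ} - φ_θ`.
The branch `F_k⁻¹` is a decreasing Möbius map, and pulling back `φ_{±θ}(u) du` along it gives
`(φ_{α±θ} - φ_α)(t) dt` with `α = πk/n = 2kθ`. Hence the `k`-th term of the transfer sum is
`φ_{(2k+1)θ} - φ_{(2k-1)θ}`, the sum telescopes to `φ_{(2n-1)θ} - φ_θ`, and `φ_β` is `π`-periodic
in `β`, so `φ_{(2n-1)θ} = φ_{-θ}`. All angles involved lie in `[θ, π - θ]`, which keeps the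
denominators positive on `(-t*, t*)`.
-/

open Real Set

/-- `(t + tan β)⁻¹`, written so that it stays meaningful where `cos β = 0`. -/
noncomputable def invAddTan (β t : ℝ) : ℝ := cos β / (cos β * t + sin β)

/-- The density `ρ`, with `t* = tan θ`. -/
noncomputable def gaussDensity (θ u : ℝ) : ℝ := 2 * tan θ / (u ^ 2 - tan θ ^ 2)

/-- The branch `F_k⁻¹`, with `θ = π / (2n)` and `α = πk/n`. -/
noncomputable def invBranch (θ α s : ℝ) : ℝ :=
  tan θ ^ 2 * (sin α * s - cos α) / (-(cos α) * s - sin α)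

lemma invAddTan_sub_invAddTan {β γ t : ℝ} (hβ : cos β * t + sin β ≠ 0)
    (hγ : cos γ * t + sin γ ≠ 0) :
    invAddTan β t - invAddTan γ t
      = sin (γ - β) / ((cos β * t + sin β) * (cos γ * t + sin γ)) := by
  rw [invAddTan, invAddTan, div_sub_div _ _ hβ hγ, sin_sub]
  ring

lemma invAddTan_add_pi (β : ℝ) : invAddTan (β + π) = invAddTan β := by
  ext t
  rw [invAddTan, invAddTan, cos_add_pi, sin_add_pi, neg_mul, ← neg_add, neg_div_neg_eq]

lemma gaussDensity_eq_invAddTan_sub {θ u : ℝ} (hc : cos θ ≠ 0)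
    (h₁ : cos (-θ) * u + sin (-θ) ≠ 0) (h₂ : cos θ * u + sin θ ≠ 0) :
    gaussDensity θ u = invAddTan (-θ) u - invAddTan θ u := by
  rw [invAddTan_sub_invAddTan h₁ h₂]
  rw [cos_neg, sin_neg] at h₁ ⊢
  have hprod := mul_ne_zero h₁ h₂
  rw [show (cos θ * u + -sin θ) * (cos θ * u + sin θ) = cos θ ^ 2 * u ^ 2 - sin θ ^ 2 by ring]
    at hprod ⊢
  rw [gaussDensity, tan_eq_sin_div_cos, sub_neg_eq_add, ← two_mul, sin_two_mul]
  field_simp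

lemma invBranch_neg (θ α : ℝ) : invBranch (-θ) α = invBranch θ α := by
  ext s
  rw [invBranch, invBranch, tan_neg, neg_sq]

lemma cos_mul_invBranch_add_sin {θ α t : ℝ} (hc : cos θ ≠ 0) (hD : cos α * t + sin α ≠ 0) :
    cos θ * invBranch θ α t + sin θ
      = sin θ * (cos (α + θ) * t + sin (α + θ)) / (cos θ * (cos α * t + sin α)) := by
  rw [invBranch, tan_eq_sin_div_cos, cos_add, sin_add, eq_div_iff (mul_ne_zero hc hD),
    show -cos α * t - sin α = -(cos α * t + sin α) by ring, div_neg]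
  set D := cos α * t + sin α with hD_def
  field_simp
  rw [hD_def]
  ring

lemma hasDerivAt_invBranch (θ α : ℝ) {t : ℝ} (hD : cos α * t + sin α ≠ 0) :
    HasDerivAt (invBranch θ α) (-tan θ ^ 2 / (cos α * t + sin α) ^ 2) t := by
  have hden : -cos α * t - sin α ≠ 0 := by
    rwa [show -cos α * t - sin α = -(cos α * t + sin α) by ring, neg_ne_zero]
  have h := ((((hasDerivAt_id' t).const_mul (sin α)).sub_const (cos α)).const_mul
    (tan θ ^ 2)).div (((hasDerivAt_id' t).const_mul (-cos α)).sub_const (sin α)) hden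
  refine h.congr_deriv ?_
  rw [show (-cos α * t - sin α) ^ 2 = (cos α * t + sin α) ^ 2 by ring]
  field_simp
  linear_combination (-tan θ ^ 2) * cos_sq_add_sin_sq α

lemma invAddTan_invBranch_mul_deriv {θ α t : ℝ} (hc : cos θ ≠ 0) (hs : sin θ ≠ 0)
    (hD : cos α * t + sin α ≠ 0) (hp : cos (α + θ) * t + sin (α + θ) ≠ 0) :
    invAddTan θ (invBranch θ α t) * (-tan θ ^ 2 / (cos α * t + sin α) ^ 2)
      = invAddTan (α + θ) t - invAddTan α t := by
  rw [invAddTan_sub_invAddTan hp hD, invAddTan, cos_mul_invBranch_add_sin hc hD,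
    show α - (α + θ) = -θ by ring, sin_neg, tan_eq_sin_div_cos]
  field_simp

lemma gaussDensity_invBranch_mul_abs_deriv {θ α t : ℝ} (hc : cos θ ≠ 0) (hs : sin θ ≠ 0)
    (hD : cos α * t + sin α ≠ 0) (hm : cos (α - θ) * t + sin (α - θ) ≠ 0)
    (hp : cos (α + θ) * t + sin (α + θ) ≠ 0) :
    gaussDensity θ (invBranch θ α t) * |deriv (invBranch θ α) t|
      = invAddTan (α + θ) t - invAddTan (α - θ) t := by
  rw [sub_eq_add_neg α θ] at hm ⊢
  have hc' : cos (-θ) ≠ 0 := by rwa [cos_neg]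
  have hs' : sin (-θ) ≠ 0 := by rwa [sin_neg, neg_ne_zero]
  have h₁ : cos (-θ) * invBranch θ α t + sin (-θ) ≠ 0 := by
    rw [← invBranch_neg, cos_mul_invBranch_add_sin hc' hD]
    exact div_ne_zero (mul_ne_zero hs' hm) (mul_ne_zero hc' hD)
  have h₂ : cos θ * invBranch θ α t + sin θ ≠ 0 := by
    rw [cos_mul_invBranch_add_sin hc hD]
    exact div_ne_zero (mul_ne_zero hs hp) (mul_ne_zero hc hD)
  have hderiv := (hasDerivAt_invBranch θ α hD).deriv
  have hderiv_nonpos : deriv (invBranch θ α) t ≤ 0 := by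
    rw [hderiv, neg_div]
    exact neg_nonpos.2 (by positivity)
  have hpull_neg := invAddTan_invBranch_mul_deriv hc' hs' hD hm
  rw [invBranch_neg, tan_neg, neg_sq] at hpull_neg
  rw [gaussDensity_eq_invAddTan_sub hc h₁ h₂, abs_of_nonpos hderiv_nonpos, hderiv, mul_neg, sub_mul,
    hpull_neg, invAddTan_invBranch_mul_deriv hc hs hD hp]
  ring

lemma abs_mul_cos_lt_sin {θ t : ℝ} (hθ : θ ∈ Ioo 0 (π / 2))
    (ht : t ∈ Ioo (-tan θ) (tan θ)) : |t * cos θ| < sin θ := by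
  have hcos : 0 < cos θ := cos_pos_of_mem_Ioo ⟨by linarith [hθ.1, pi_pos], hθ.2⟩
  rw [abs_mul, abs_of_pos hcos, ← lt_div_iff₀ hcos, ← tan_eq_sin_div_cos]
  exact abs_lt.2 ht

lemma cos_mul_add_sin_pos {θ β t : ℝ} (hθ : θ ∈ Ioo 0 (π / 2)) (hβ : β ∈ Icc θ (π - θ))
    (ht : t ∈ Ioo (-tan θ) (tan θ)) : 0 < cos β * t + sin β := by
  obtain ⟨hu₁, hu₂⟩ := abs_lt.1 (abs_mul_cos_lt_sin hθ ht)
  have hcos : 0 < cos θ := cos_pos_of_mem_Ioo ⟨by linarith [hθ.1, pi_pos], hθ.2⟩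
  have hsinθ : 0 < sin θ := sin_pos_of_pos_of_lt_pi hθ.1 (by linarith [hθ.2, pi_pos])
  have hsin : 0 < sin β :=
    sin_pos_of_pos_of_lt_pi (by linarith [hβ.1, hθ.1]) (by linarith [hβ.2, hθ.1])
  have hminus : 0 ≤ sin (β - θ) :=
    sin_nonneg_of_nonneg_of_le_pi (by linarith [hβ.1]) (by linarith [hβ.2, hθ.1])
  have hplus : 0 ≤ sin (β + θ) :=
    sin_nonneg_of_nonneg_of_le_pi (by linarith [hβ.1, hθ.1]) (by linarith [hβ.2])
  -- `cos θ * (cos β * t + sin β)` is affine in `u = t * cos θ`; interpolate between `u = ∓ sin θ`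
  have hinterp : 2 * sin θ * (cos θ * (cos β * t + sin β))
      = (sin θ - t * cos θ) * sin (β - θ) + (sin θ + t * cos θ) * sin (β + θ) := by
    rw [sin_sub, sin_add]; ring
  have hsum : 0 < sin (β - θ) + sin (β + θ) := by
    rw [sin_sub, sin_add]; nlinarith [mul_pos hsin hcos]
  have hrhs : 0 < (sin θ - t * cos θ) * sin (β - θ) + (sin θ + t * cos θ) * sin (β + θ) := by
    rcases le_total 0 (t * cos θ) with hu | hu
    · nlinarith [mul_pos (sub_pos.2 hu₂) hsum, mul_nonneg hu hplus]
    · nlinarith [mul_pos (neg_lt_iff_pos_add.1 hu₁) hsum, mul_nonneg (neg_nonneg.2 hu) hminus]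
  rw [← hinterp] at hrhs
  exact pos_of_mul_pos_right (pos_of_mul_pos_right hrhs (by positivity)) hcos.le

lemma gaussDensity_invBranch_mul_abs_deriv_of_mem {θ α t : ℝ} (hθ : θ ∈ Ioo 0 (π / 2))
    (hα : α ∈ Icc (2 * θ) (π - 2 * θ)) (ht : t ∈ Ioo (-tan θ) (tan θ)) :
    gaussDensity θ (invBranch θ α t) * |deriv (invBranch θ α) t|
      = invAddTan (α + θ) t - invAddTan (α - θ) t := by
  obtain ⟨hα₁, hα₂⟩ := hα
  have ⟨hθ₀, hθ₁⟩ := hθ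
  exact gaussDensity_invBranch_mul_abs_deriv
    (cos_pos_of_mem_Ioo ⟨by linarith [pi_pos], hθ₁⟩).ne'
    (sin_pos_of_pos_of_lt_pi hθ₀ (by linarith)).ne'
    (cos_mul_add_sin_pos hθ ⟨by linarith, by linarith⟩ ht).ne'
    (cos_mul_add_sin_pos hθ ⟨by linarith, by linarith⟩ ht).ne'
    (cos_mul_add_sin_pos hθ ⟨by linarith, by linarith⟩ ht).ne'

lemma gaussDensity_eq_invAddTan_pi_sub_sub {θ t : ℝ} (hθ : θ ∈ Ioo 0 (π / 2))
    (ht : t ∈ Ioo (-tan θ) (tan θ)) :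
    gaussDensity θ t = invAddTan (π - θ) t - invAddTan θ t := by
  obtain ⟨hu₁, hu₂⟩ := abs_lt.1 (abs_mul_cos_lt_sin hθ ht)
  rw [sub_eq_neg_add π θ, invAddTan_add_pi]
  exact gaussDensity_eq_invAddTan_sub (cos_pos_of_mem_Ioo ⟨by linarith [hθ.1, pi_pos], hθ.2⟩).ne'
    (by rw [cos_neg, sin_neg]; linarith) (by linarith)

theorem invariant_density_transfer (n : ℕ) (hn : 3 ≤ n) (t : ℝ)
    (ht : t ∈ Set.Ioo (-(tan (π / (2 * n)))) (tan (π / (2 * n)))) :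
    2 * tan (π / (2 * n)) / (t ^ 2 - tan (π / (2 * n)) ^ 2) =
      ∑ k ∈ Finset.Icc 1 (n - 1),
        (2 * tan (π / (2 * n)) /
          ((tan (π / (2 * n)) ^ 2 * (sin (π * k / n) * t - cos (π * k / n)) /
            (-(cos (π * k / n)) * t - sin (π * k / n))) ^ 2 - tan (π / (2 * n)) ^ 2)) *
        |deriv (fun s : ℝ => tan (π / (2 * n)) ^ 2 * (sin (π * k / n) * s - cos (π * k / n)) /
            (-(cos (π * k / n)) * s - sin (π * k / n))) t| := by
  obtain ⟨θ, hθ⟩ : ∃ θ, θ = π / (2 * n) := ⟨_, rfl⟩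
  rw [← hθ] at ht ⊢
  show gaussDensity θ t = ∑ k ∈ Finset.Icc 1 (n - 1),
    gaussDensity θ (invBranch θ (π * k / n) t) * |deriv (invBranch θ (π * k / n)) t|
  have hn' : (3 : ℝ) ≤ n := by exact_mod_cast hn
  have hπ : π = 2 * n * θ := by rw [hθ]; field_simp
  have hθpos : 0 < θ := by rw [hθ]; positivity
  have hθ' : θ ∈ Ioo 0 (π / 2) := ⟨hθpos, by rw [hπ]; nlinarith⟩
  set f : ℕ → ℝ := fun j => invAddTan ((2 * j - 1) * θ) t
  have hterm : ∀ k ∈ Finset.Icc 1 (n - 1),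
      gaussDensity θ (invBranch θ (π * k / n) t) * |deriv (invBranch θ (π * k / n)) t|
        = f (k + 1) - f k := by
    intro k hk
    have hk₁ : (1 : ℝ) ≤ k := by exact_mod_cast (Finset.mem_Icc.1 hk).1
    have hk₂ : (k : ℝ) + 1 ≤ n := by exact_mod_cast (by grind : k + 1 ≤ n)
    have hα : 2 * k * θ ∈ Icc (2 * θ) (π - 2 * θ) := ⟨by nlinarith, by rw [hπ]; nlinarith⟩
    rw [show π * k / n = 2 * k * θ by rw [hπ]; field_simp,
      gaussDensity_invBranch_mul_abs_deriv_of_mem hθ' hα ht]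
    simp only [f, Nat.cast_add, Nat.cast_one]
    ring_nf
  rw [Finset.sum_congr rfl hterm, Finset.sum_Icc_sub (by omega), Nat.sub_add_cancel (by omega),
    gaussDensity_eq_invAddTan_pi_sub_sub hθ' ht]
  congr 2 <;> push_cast <;> linarith
end

section
/- The map T(t) = (3t−1)/(t−1) on [0, 1/3], T(t) = 1/t − 2 on [1/3, 1/2], T(t) = (t−1)/(1−3t) on [1/2, 1] maps [0,1] into [0,1], and the density ρ(t) = 1/(t(1−t)) satisfies the transfer operator equation ρ(t) = ∑_{branches b} ρ(b^{-1}(t))·|(b^{-1})'(t)| for all t ∈ (0,1). -/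
/-!
The inverse branches are Möbius maps `g s = (a s + b) / (c s + d)`, and for such a map
`g (1 - g) = (a s + b) ((c - a) s + d - b) / (c s + d)²` while `|g'| = |a d - b c| / (c s + d)²`,
so the density `ρ t = 1 / (t (1 - t))` pulls back to `|a d - b c| / ((a s + b) ((c - a) s + d - b))`.
The three branches contribute `1 / (1 - t)`, `1 / (1 + t)` and `1 / (t (1 + t))`, which sum to `ρ t`.
-/

open Real

noncomputable def mobius (a b c d : ℝ) (s : ℝ) : ℝ := (a * s + b) / (c * s + d)

theorem hasDerivAt_mobius (a b c d : ℝ) {t : ℝ} (ht : c * t + d ≠ 0) :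
    HasDerivAt (mobius a b c d) ((a * d - b * c) / (c * t + d) ^ 2) t := by
  have hnum : HasDerivAt (fun s => a * s + b) a t := by
    simpa using ((hasDerivAt_id t).const_mul a).add_const b
  have hden : HasDerivAt (fun s => c * s + d) c t := by
    simpa using ((hasDerivAt_id t).const_mul c).add_const d
  exact (hnum.div hden ht).congr_deriv (by ring)

theorem mobius_mul_one_sub (a b c d : ℝ) {t : ℝ} (ht : c * t + d ≠ 0) :
    mobius a b c d t * (1 - mobius a b c d t) =
      (a * t + b) * ((c - a) * t + (d - b)) / (c * t + d) ^ 2 := by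
  rw [mobius, one_sub_div ht, div_mul_div_comm, sq]
  congr 1
  ring

/-- Both sides vanish when `a t + b = 0` or `(c - a) t + d - b = 0`, since `1 / 0 = 0` in `ℝ`. -/
theorem one_div_mobius_mul_one_sub_mul_abs_deriv (a b c d : ℝ) {t : ℝ} (ht : c * t + d ≠ 0) :
    1 / (mobius a b c d t * (1 - mobius a b c d t)) * |deriv (mobius a b c d) t| =
      |a * d - b * c| / ((a * t + b) * ((c - a) * t + (d - b))) := by
  have hq : 0 < (c * t + d) ^ 2 := by positivity
  rw [mobius_mul_one_sub a b c d ht, (hasDerivAt_mobius a b c d ht).deriv, abs_div,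
    abs_of_pos hq, one_div_div, div_mul_div_comm, mul_comm, mul_div_mul_right _ _ hq.ne']

theorem mapsTo_romik_first_branch :
    Set.MapsTo (fun t : ℝ => (3 * t - 1) / (t - 1)) (Set.Icc 0 (1 / 3)) (Set.Icc 0 1) := by
  rintro t ⟨h0, h1⟩
  have hden : t - 1 < 0 := by linarith
  exact ⟨div_nonneg_of_nonpos (by linarith) hden.le, (div_le_one_of_neg hden).2 (by linarith)⟩

theorem mapsTo_romik_second_branch :
    Set.MapsTo (fun t : ℝ => 1 / t - 2) (Set.Icc (1 / 3) (1 / 2)) (Set.Icc 0 1) := by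
  rintro t ⟨h0, h1⟩
  have ht : 0 < t := by linarith
  have hlo : 2 ≤ 1 / t := by rw [le_div_iff₀ ht]; linarith
  have hhi : 1 / t ≤ 3 := by rw [div_le_iff₀ ht]; linarith
  exact ⟨by linarith, by linarith⟩

theorem mapsTo_romik_third_branch :
    Set.MapsTo (fun t : ℝ => (t - 1) / (1 - 3 * t)) (Set.Icc (1 / 2) 1) (Set.Icc 0 1) := by
  rintro t ⟨h0, h1⟩
  have hden : 1 - 3 * t < 0 := by linarith
  exact ⟨div_nonneg_of_nonpos (by linarith) hden.le, (div_le_one_of_neg hden).2 (by linarith)⟩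

theorem romik_map_invariant_density :
    (∀ t ∈ Set.Icc (0 : ℝ) (1 / 3), (3 * t - 1) / (t - 1) ∈ Set.Icc (0 : ℝ) 1) ∧
    (∀ t ∈ Set.Icc (1 / 3 : ℝ) (1 / 2), 1 / t - 2 ∈ Set.Icc (0 : ℝ) 1) ∧
    (∀ t ∈ Set.Icc (1 / 2 : ℝ) 1, (t - 1) / (1 - 3 * t) ∈ Set.Icc (0 : ℝ) 1) ∧
    ∀ t ∈ Set.Ioo (0 : ℝ) 1,
      1 / (t * (1 - t)) =
        1 / (((t - 1) / (t - 3)) * (1 - (t - 1) / (t - 3))) *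
            |deriv (fun s : ℝ => (s - 1) / (s - 3)) t| +
        1 / ((1 / (t + 2)) * (1 - 1 / (t + 2))) *
            |deriv (fun s : ℝ => 1 / (s + 2)) t| +
        1 / (((t + 1) / (3 * t + 1)) * (1 - (t + 1) / (3 * t + 1))) *
            |deriv (fun s : ℝ => (s + 1) / (3 * s + 1)) t| := by
  refine ⟨mapsTo_romik_first_branch, mapsTo_romik_second_branch, mapsTo_romik_third_branch, ?_⟩
  rintro t ⟨h0, h1⟩
  have hfirst : (fun s : ℝ => (s - 1) / (s - 3)) = mobius 1 (-1) 1 (-3) := by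
    funext s; unfold mobius; ring
  have hsecond : (fun s : ℝ => 1 / (s + 2)) = mobius 0 1 1 2 := by
    funext s; unfold mobius; ring
  have hthird : (fun s : ℝ => (s + 1) / (3 * s + 1)) = mobius 1 1 3 1 := by
    funext s; unfold mobius; ring
  have e₁ := one_div_mobius_mul_one_sub_mul_abs_deriv 1 (-1) 1 (-3) (t := t) (by linarith)
  have e₂ := one_div_mobius_mul_one_sub_mul_abs_deriv 0 1 1 2 (t := t) (by linarith)
  have e₃ := one_div_mobius_mul_one_sub_mul_abs_deriv 1 1 3 1 (t := t) (by linarith)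
  rw [← hfirst] at e₁
  rw [← hsecond] at e₂
  rw [← hthird] at e₃
  beta_reduce at e₁ e₂ e₃
  rw [e₁, e₂, e₃]
  have ht : t ≠ 0 := h0.ne'
  have hone_sub : 1 - t ≠ 0 := by linarith
  have hsub_one : t - 1 ≠ 0 := by linarith
  have hadd_one : t + 1 ≠ 0 := by linarith
  norm_num [← sub_eq_add_neg]
  field_simp
  ring
end

section
/- Under stereographic parametrization z(t) = ((2t)/(1+t²), (1−t²)/(1+t²)) of the unit circle and with P = (0, 1/cos(π/n)) a vertex of the circumscribed regular n-gon, the second intersection of the line through P and z(t) with the unit circle is z(s) where s = tan²(π/(2n))/t. Formally: for t ≠ 0 with |t| ≤ tan(π/(2n)), the point z(t*²/t) (t* = tan(π/(2n))) lies on the line through P and z(t). -/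
open Real

/-- With `t = tan (θ/2)` and `u = tan (φ/2)`, `z(t) = (sin θ, cos θ)` and `z(u) = (sin φ, cos φ)`, and the
chord between them meets the axis `x = 0` at height `cos ((θ-φ)/2) / cos ((θ+φ)/2) = (1+tu)/(1-tu)`. -/
theorem stereographic_chord_through_axis_point (t u : ℝ) (htu : t * u ≠ 1) :
    2 * t / (1 + t ^ 2) * ((1 - u ^ 2) / (1 + u ^ 2) - (1 + t * u) / (1 - t * u)) -
      2 * u / (1 + u ^ 2) * ((1 - t ^ 2) / (1 + t ^ 2) - (1 + t * u) / (1 - t * u)) = 0 := by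
  have h : 1 - t * u ≠ 0 := sub_ne_zero.mpr htu.symm
  field_simp
  ring

theorem stereographic_collinearity_general (n : ℕ) (hn : 3 ≤ n) (t : ℝ) (ht0 : t ≠ 0) :
    (2 * t / (1 + t ^ 2) - 0) *
        ((1 - (tan (π / (2 * n)) ^ 2 / t) ^ 2) / (1 + (tan (π / (2 * n)) ^ 2 / t) ^ 2)
          - 1 / cos (π / n)) -
      (2 * (tan (π / (2 * n)) ^ 2 / t) / (1 + (tan (π / (2 * n)) ^ 2 / t) ^ 2) - 0) *
        ((1 - t ^ 2) / (1 + t ^ 2) - 1 / cos (π / n)) = 0 := by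
  have hcos_pos : 0 < cos (π / n) := by
    have hn' : (2 : ℝ) < n := by exact_mod_cast hn
    have hpos : 0 < π / n := div_pos pi_pos (by linarith)
    exact cos_pos_of_mem_Ioo ⟨by linarith [pi_pos], div_lt_div_of_pos_left pi_pos two_pos hn'⟩
  have hcos := cos_eq_two_mul_tan_half_div_one_sub_tan_half_sq (π / n) (by linarith)
  rw [show π / n / 2 = π / (2 * n) by ring] at hcos
  set s := tan (π / (2 * n))
  have hs : s ^ 2 ≠ 1 := fun h ↦ by norm_num [h] at hcos; linarith
  have hP : 1 / cos (π / n) = (1 + t * (s ^ 2 / t)) / (1 - t * (s ^ 2 / t)) := by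
    rw [mul_div_cancel₀ _ ht0, hcos, one_div_div]
  rw [hP, sub_zero, sub_zero]
  exact stereographic_chord_through_axis_point t _ (by rwa [mul_div_cancel₀ _ ht0])

theorem stereographic_collinearity (n : ℕ) (hn : 3 ≤ n) (t : ℝ) (ht0 : t ≠ 0)
    (ht1 : |t| ≤ tan (π / (2 * n))) :
    (2 * t / (1 + t ^ 2) - 0) *
        ((1 - (tan (π / (2 * n)) ^ 2 / t) ^ 2) / (1 + (tan (π / (2 * n)) ^ 2 / t) ^ 2)
          - 1 / cos (π / n)) -
      (2 * (tan (π / (2 * n)) ^ 2 / t) / (1 + (tan (π / (2 * n)) ^ 2 / t) ^ 2) - 0) *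
        ((1 - t ^ 2) / (1 + t ^ 2) - 1 / cos (π / n)) = 0 :=
  stereographic_collinearity_general n hn t ht0
end
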